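/- For any positive definite Hermitian ρ and Hermitian X, the supremum of |tr(Xτ)| over all Hermitian τ with ∥τ∥_ρ = 1 equals sqrt(tr((ρ^{1/2} X ρ^{1/2})²)), i.e., the dual norm of the local norm ∥·∥_ρ is ∥X∥_{ρ,*} = sqrt(tr((ρX)²)). -/

import Mathlib

open Matrix
open scoped ComplexOrder

/-- The square root of a positive semidefinite matrix, as defined in the older Mathlib
(`Matrix.PosSemidef.sqrt`, removed since). -/
noncomputable def Matrix.PosSemidef.sqrt {n 𝕜 : Type*} [Fintype n] [DecidableEq n] [RCLike 𝕜]
    {A : Matrix n n 𝕜} (hA : A.PosSemidef) : Matrix n n 𝕜 :=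
  hA.1.eigenvectorUnitary.1 * diagonal ((↑) ∘ (√·) ∘ hA.1.eigenvalues) *
    (star hA.1.eigenvectorUnitary : Matrix n n 𝕜)

/-!
Write `S = ρ^{1/2}` and `Y = S X S`. The substitution `τ = S σ S` turns the constraint
`∥τ∥_ρ = 1` into `tr(σ²) = 1` and the objective into `|tr(Yσ)|`, so the supremum is that of
`|tr(Yσ)|` over Hermitian `σ` of unit Frobenius norm. By Cauchy–Schwarz for the Frobenius inner
product `tr(Aᴴ B)` this is at most `sqrt(tr(Y²))`, attained at `σ = Y / sqrt(tr(Y²))`; when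
`Y = 0` all values vanish, and so does the supremum even if the set is empty (`sSup ∅ = 0`).
Finally `tr((SXS)²) = tr((ρX)²)` by cyclicity of the trace.
-/

namespace Matrix

theorem trace_pow_mul_comm {n R : Type*} [Fintype n] [DecidableEq n] [CommSemiring R]
    (A B : Matrix n n R) : ∀ k : ℕ, ((A * B) ^ k).trace = ((B * A) ^ k).trace
  | 0 => by simp
  | k + 1 => by
    rw [pow_succ, ← Matrix.mul_assoc, mul_pow_mul, trace_mul_comm, ← Matrix.mul_assoc, ← pow_succ']

variable {n 𝕜 : Type*} [Fintype n] [RCLike 𝕜]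

lemma re_trace_conjTranspose_mul_self_nonneg (A : Matrix n n 𝕜) :
    0 ≤ RCLike.re (Aᴴ * A).trace :=
  (RCLike.nonneg_iff.mp (posSemidef_conjTranspose_mul_self A).trace_nonneg).1

lemma ofReal_re_trace_conjTranspose_mul_self (A : Matrix n n 𝕜) :
    (RCLike.re (Aᴴ * A).trace : 𝕜) = (Aᴴ * A).trace := by
  obtain ⟨x, -, hx⟩ :=
    RCLike.nonneg_iff_exists_ofReal.mp (posSemidef_conjTranspose_mul_self A).trace_nonneg
  rw [← hx, RCLike.ofReal_re]

lemma IsHermitian.isHermitian_mul_mul {S A : Matrix n n 𝕜} (hS : S.IsHermitian)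
    (hA : A.IsHermitian) : (S * A * S).IsHermitian := by
  simpa only [hS.eq] using isHermitian_mul_mul_conjTranspose S hA

variable [DecidableEq n]

lemma norm_trace_conjTranspose_mul_le (A B : Matrix n n 𝕜) :
    ‖(Aᴴ * B).trace‖ ≤ √(RCLike.re (Aᴴ * A).trace) * √(RCLike.re (Bᴴ * B).trace) := by
  -- Mathlib's inner product `⟪x, y⟫ = tr(y M xᴴ)` for `M = 1` is the Frobenius inner product.
  let := toMatrixSeminormedAddCommGroup (1 : Matrix n n 𝕜) PosSemidef.one
  let := toMatrixInnerProductSpace (1 : Matrix n n 𝕜) PosSemidef.one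
  have h := norm_inner_le_norm (𝕜 := 𝕜) Bᴴ Aᴴ
  rw [norm_eq_sqrt_re_inner (𝕜 := 𝕜) Bᴴ, norm_eq_sqrt_re_inner (𝕜 := 𝕜) Aᴴ] at h
  change ‖(Aᴴ * 1 * Bᴴᴴ).trace‖ ≤ √(RCLike.re (Bᴴ * 1 * Bᴴᴴ).trace) *
    √(RCLike.re (Aᴴ * 1 * Aᴴᴴ).trace) at h
  simp only [Matrix.mul_one, conjTranspose_conjTranspose] at h
  rwa [mul_comm]

lemma IsHermitian.sq_eq_conjTranspose_mul_self {A : Matrix n n 𝕜} (hA : A.IsHermitian) :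
    A ^ 2 = Aᴴ * A := by
  rw [hA.eq, sq]

theorem IsHermitian.sSup_norm_trace_mul {Y : Matrix n n 𝕜} (hY : Y.IsHermitian) :
    sSup {r : ℝ | ∃ σ : Matrix n n 𝕜, σ.IsHermitian ∧ √(RCLike.re (σ ^ 2).trace) = 1 ∧
      r = ‖(Y * σ).trace‖} = √(RCLike.re (Y ^ 2).trace) := by
  set N := √(RCLike.re (Y ^ 2).trace)
  have hbound : ∀ r ∈ {r : ℝ | ∃ σ : Matrix n n 𝕜, σ.IsHermitian ∧
      √(RCLike.re (σ ^ 2).trace) = 1 ∧ r = ‖(Y * σ).trace‖}, r ≤ N := by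
    rintro _ ⟨σ, hσ, hσ1, rfl⟩
    calc ‖(Y * σ).trace‖ = ‖(Yᴴ * σ).trace‖ := by rw [hY.eq]
      _ ≤ √(RCLike.re (Yᴴ * Y).trace) * √(RCLike.re (σᴴ * σ).trace) :=
        norm_trace_conjTranspose_mul_le Y σ
      _ = N := by
        rw [← hY.sq_eq_conjTranspose_mul_self, ← hσ.sq_eq_conjTranspose_mul_self, hσ1, mul_one]
  have hYY : (Y ^ 2).trace = ((N ^ 2 : ℝ) : 𝕜) := by
    rw [Real.sq_sqrt, hY.sq_eq_conjTranspose_mul_self, ofReal_re_trace_conjTranspose_mul_self]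
    rw [hY.sq_eq_conjTranspose_mul_self]
    exact re_trace_conjTranspose_mul_self_nonneg Y
  have hN0 : 0 ≤ N := Real.sqrt_nonneg _
  rcases hN0.eq_or_lt with hN | hN
  · rw [← hN]
    refine le_antisymm (Real.sSup_nonpos fun r hr ↦ (hbound r hr).trans hN.ge)
      (Real.sSup_nonneg ?_)
    rintro _ ⟨σ, -, -, rfl⟩
    exact norm_nonneg _
  refine IsGreatest.csSup_eq ⟨⟨N⁻¹ • Y, hY.smul (IsSelfAdjoint.all _), ?_, ?_⟩, hbound⟩
  · rw [smul_pow, trace_smul, hYY, RCLike.real_smul_eq_coe_mul, ← RCLike.ofReal_mul,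
      RCLike.ofReal_re, inv_pow, inv_mul_cancel₀ (by positivity), Real.sqrt_one]
  · rw [Matrix.mul_smul, trace_smul, ← sq, hYY, RCLike.real_smul_eq_coe_mul,
      ← RCLike.ofReal_mul, RCLike.norm_ofReal, abs_of_pos (by positivity)]
    field_simp

lemma IsHermitian.exists_isHermitian_iff_conj {S : Matrix n n 𝕜} (hS : S.IsHermitian)
    (hSu : IsUnit S) (Q : Matrix n n 𝕜 → Prop) :
    (∃ τ, τ.IsHermitian ∧ Q τ) ↔ ∃ σ, σ.IsHermitian ∧ Q (S * σ * S) := by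
  have hdet := (isUnit_iff_isUnit_det S).mp hSu
  constructor
  · rintro ⟨τ, hτ, hQ⟩
    refine ⟨S⁻¹ * τ * S⁻¹, hS.inv.isHermitian_mul_mul hτ, ?_⟩
    rwa [← Matrix.mul_assoc, ← Matrix.mul_assoc, mul_nonsing_inv _ hdet, Matrix.one_mul,
      nonsing_inv_mul_cancel_right S τ hdet]
  · rintro ⟨σ, hσ, hQ⟩
    exact ⟨_, hS.isHermitian_mul_mul hσ, hQ⟩

section Sqrt

open scoped MatrixOrder

lemma PosSemidef.sqrt_eq_cfcSqrt {A : Matrix n n 𝕜} (hA : A.PosSemidef) :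
    hA.sqrt = CFC.sqrt A := by
  rw [CFC.sqrt_eq_real_sqrt A hA.nonneg, cfcₙ_eq_cfc, hA.1.cfc_eq, IsHermitian.cfc,
    Unitary.conjStarAlgAut_apply]
  rfl

lemma PosSemidef.isHermitian_sqrt {A : Matrix n n 𝕜} (hA : A.PosSemidef) :
    hA.sqrt.IsHermitian := by
  rw [hA.sqrt_eq_cfcSqrt]
  exact (CFC.sqrt_nonneg A).posSemidef.1

lemma PosSemidef.sqrt_mul_sqrt {A : Matrix n n 𝕜} (hA : A.PosSemidef) :
    hA.sqrt * hA.sqrt = A := by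
  rw [hA.sqrt_eq_cfcSqrt, CFC.sqrt_mul_sqrt_self A hA.nonneg]

end Sqrt

lemma PosDef.isUnit_sqrt {A : Matrix n n 𝕜} (hA : A.PosDef) : IsUnit hA.posSemidef.sqrt :=
  ((Commute.refl _).isUnit_mul_iff.mp (hA.posSemidef.sqrt_mul_sqrt.symm ▸ hA.isUnit)).1

end Matrix

theorem stmt_3_general {d : ℕ} (ρ X : Matrix (Fin d) (Fin d) ℂ)
    (hρ : ρ.PosDef) (hX : X.IsHermitian) :
    sSup {r : ℝ | ∃ τ : Matrix (Fin d) (Fin d) ℂ, τ.IsHermitian ∧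
        Real.sqrt ((Matrix.trace (((hρ.posSemidef.sqrt)⁻¹ * τ * (hρ.posSemidef.sqrt)⁻¹) ^ 2)).re) = 1 ∧
        r = ‖Matrix.trace (X * τ)‖}
      = Real.sqrt ((Matrix.trace ((hρ.posSemidef.sqrt * X * hρ.posSemidef.sqrt) ^ 2)).re) ∧
    Real.sqrt ((Matrix.trace ((hρ.posSemidef.sqrt * X * hρ.posSemidef.sqrt) ^ 2)).re)
      = Real.sqrt ((Matrix.trace ((ρ * X) ^ 2)).re) := by
  set S := hρ.posSemidef.sqrt
  have hS : S.IsHermitian := hρ.posSemidef.isHermitian_sqrt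
  have hdet : IsUnit S.det := (isUnit_iff_isUnit_det S).mp hρ.isUnit_sqrt
  have hcancel (σ : Matrix (Fin d) (Fin d) ℂ) : S⁻¹ * (S * σ * S) * S⁻¹ = σ := by
    rw [← Matrix.mul_assoc, ← Matrix.mul_assoc, nonsing_inv_mul _ hdet, Matrix.one_mul,
      mul_nonsing_inv_cancel_right _ _ hdet]
  have hcycle (σ : Matrix (Fin d) (Fin d) ℂ) :
      (X * (S * σ * S)).trace = (S * X * S * σ).trace := by
    rw [← Matrix.mul_assoc, trace_mul_comm, ← Matrix.mul_assoc, ← Matrix.mul_assoc]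
  refine ⟨?_, ?_⟩
  · have h := (hS.isHermitian_mul_mul hX).sSup_norm_trace_mul
    simp only [RCLike.re_to_complex] at h
    rw [← h]
    congr 1
    ext r
    rw [Set.mem_ofPred_eq, hS.exists_isHermitian_iff_conj hρ.isUnit_sqrt]
    simp only [hcancel, hcycle, Set.mem_ofPred_eq]
  · rw [Matrix.mul_assoc, trace_pow_mul_comm, Matrix.mul_assoc, hρ.posSemidef.sqrt_mul_sqrt,
      trace_pow_mul_comm]

/-- The dual norm of the local norm `∥·∥_ρ`: the supremum of `|tr(Xτ)|` over Hermitian `τ`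
with `∥τ∥_ρ = 1` equals `sqrt(tr((ρ^{1/2} X ρ^{1/2})²))`, which equals `sqrt(tr((ρX)²))`. -/
theorem stmt_3 {d : ℕ} (hd : 0 < d) (ρ X : Matrix (Fin d) (Fin d) ℂ)
    (hρ : ρ.PosDef) (hX : X.IsHermitian) :
    sSup {r : ℝ | ∃ τ : Matrix (Fin d) (Fin d) ℂ, τ.IsHermitian ∧
        Real.sqrt ((Matrix.trace (((hρ.posSemidef.sqrt)⁻¹ * τ * (hρ.posSemidef.sqrt)⁻¹) ^ 2)).re) = 1 ∧
        r = ‖Matrix.trace (X * τ)‖}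
      = Real.sqrt ((Matrix.trace ((hρ.posSemidef.sqrt * X * hρ.posSemidef.sqrt) ^ 2)).re) ∧
    Real.sqrt ((Matrix.trace ((hρ.posSemidef.sqrt * X * hρ.posSemidef.sqrt) ^ 2)).re)
      = Real.sqrt ((Matrix.trace ((ρ * X) ^ 2)).re) :=
  stmt_3_general ρ X hρ hX
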